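/- arXiv:1807.04124 — 3 statements merged into one kernel-verified Lean document; each statement's English description precedes it below -/
import Mathlib

section
/- Fix 1/2 < σ ≤ σ₀ < 1 and 0 < α ≤ 1. Then ∑_{1 ≤ m ≠ n ≤ T} (m+α)^{-σ}(n+α)^{-σ} |log((n+α)/(m+α))|^{-1} = O_{σ₀}(T^{2-2σ} log T). -/
/-!
For `x < y` one has `log (y / x) ≥ (y - x) / y`, so with `x, y = m + α, n + α ≤ 2T` each
off-diagonal term is at most `(2T)^(1-σ) (x^(-σ) + y^(-σ)) / |m - n|`. By symmetry the sum is then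
at most `2 (2T)^(1-σ) · max_m ∑_{n ≠ m} |m - n|⁻¹ · ∑_m (m + α)^(-σ)`; the inner sum is at most
twice a harmonic number, `O(log T)`, and comparison with `∫ x^(-σ)` bounds the last sum by
`(2T)^(1-σ) / (1 - σ)`.
-/

open Finset Real

lemma inv_log_div_le_div_sub {x y : ℝ} (hx : 0 < x) (hxy : x < y) :
    (log (y / x))⁻¹ ≤ y / (y - x) := by
  have hy : 0 < y := hx.trans hxy
  have hlog : (y - x) / y ≤ log (y / x) := by
    have := one_sub_inv_le_log_of_pos (div_pos hy hx)
    rwa [inv_div, one_sub_div hy.ne'] at this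
  simpa only [inv_div] using inv_anti₀ (div_pos (sub_pos.2 hxy) hy) hlog

lemma rpow_neg_mul_rpow_neg_mul_inv_abs_log_div_le {σ M x y : ℝ} (hσ : σ ≤ 1) (hx : 0 < x)
    (hy : 0 < y) (hxM : x ≤ M) (hyM : y ≤ M) :
    x ^ (-σ) * y ^ (-σ) * |log (y / x)|⁻¹ ≤ (x ^ (-σ) + y ^ (-σ)) * (M ^ (1 - σ) * |y - x|⁻¹) := by
  wlog hxy : x ≤ y generalizing x y
  · have := this hy hx hyM hxM (le_of_not_ge hxy)
    rwa [← inv_div, log_inv, abs_neg, abs_sub_comm, mul_comm (y ^ _), add_comm (y ^ _)] at this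
  obtain rfl | hxy := hxy.eq_or_lt
  · simp
  have hyx : 0 < y - x := sub_pos.2 hxy
  rw [abs_of_pos (log_pos ((one_lt_div hx).2 hxy)), abs_of_pos hyx]
  calc x ^ (-σ) * y ^ (-σ) * (log (y / x))⁻¹ ≤ x ^ (-σ) * y ^ (-σ) * (y / (y - x)) := by
        gcongr; exact inv_log_div_le_div_sub hx hxy
    _ = x ^ (-σ) * (y ^ (1 - σ) * (y - x)⁻¹) := by
        rw [sub_eq_add_neg 1 σ, rpow_add hy, rpow_one]; ring
    _ ≤ (x ^ (-σ) + y ^ (-σ)) * (M ^ (1 - σ) * (y - x)⁻¹) := by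
        gcongr
        exact le_add_of_nonneg_right (by positivity)

lemma sum_sum_add_mul_le_of_symm {ι : Type*} (s : Finset ι) {a : ι → ℝ} {w : ι → ι → ℝ} {B : ℝ}
    (ha : ∀ i ∈ s, 0 ≤ a i) (hw : ∀ i j, w i j = w j i) (hB : ∀ i ∈ s, ∑ j ∈ s, w i j ≤ B) :
    ∑ i ∈ s, ∑ j ∈ s, (a i + a j) * w i j ≤ 2 * B * ∑ i ∈ s, a i := by
  have hrow : ∑ i ∈ s, ∑ j ∈ s, a i * w i j ≤ B * ∑ i ∈ s, a i := by
    rw [mul_sum]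
    gcongr with i hi
    rw [← mul_sum, mul_comm B]
    exact mul_le_mul_of_nonneg_left (hB i hi) (ha i hi)
  have hswap : ∑ i ∈ s, ∑ j ∈ s, a j * w i j = ∑ i ∈ s, ∑ j ∈ s, a i * w i j := by
    rw [sum_comm]; simp_rw [hw]
  simp_rw [add_mul, sum_add_distrib, hswap]
  linarith

lemma sum_inv_natCast_comp_le_harmonic {s : Finset ℕ} {f : ℕ → ℕ} {N : ℕ} (hf : Set.InjOn f s)
    (hfN : ∀ n ∈ s, f n ≤ N) : ∑ n ∈ s, ((f n : ℝ))⁻¹ ≤ harmonic N := by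
  calc ∑ n ∈ s, ((f n : ℝ))⁻¹ = ∑ k ∈ s.image f, (k : ℝ)⁻¹ :=
        (sum_image (f := fun k : ℕ ↦ (k : ℝ)⁻¹) hf).symm
    _ ≤ ∑ k ∈ range (N + 1), (k : ℝ)⁻¹ := by
        refine sum_le_sum_of_subset_of_nonneg ?_ fun _ _ _ ↦ by positivity
        simp only [subset_iff, mem_image, mem_range, forall_exists_index, and_imp]
        rintro _ n hn rfl
        exact Nat.lt_succ_of_le (hfN n hn)
    _ = harmonic N := by simp [sum_range_succ', harmonic]

/-- The diagonal term `n = m` is `|0|⁻¹ = 0`. -/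
lemma sum_inv_abs_sub_le_two_mul_harmonic {m N : ℕ} (hm : m ≤ N) :
    ∑ n ∈ Icc 1 N, |(m : ℝ) - n|⁻¹ ≤ 2 * harmonic N := by
  rw [← sum_filter_add_sum_filter_not _ (· < m), two_mul]
  gcongr
  · calc _ = ∑ n ∈ Icc 1 N with n < m, ((m - n : ℕ) : ℝ)⁻¹ := by
          refine sum_congr rfl fun n hn ↦ ?_
          rw [mem_filter] at hn
          rw [Nat.cast_sub hn.2.le, abs_of_pos (sub_pos.2 (by exact_mod_cast hn.2))]
      _ ≤ harmonic N := by
          refine sum_inv_natCast_comp_le_harmonic (fun a ha b hb h ↦ ?_) fun n _ ↦ by omega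
          simp only [coe_filter, mem_Icc, Set.mem_ofPred_eq] at ha hb h
          omega
  · calc _ = ∑ n ∈ Icc 1 N with ¬n < m, ((n - m : ℕ) : ℝ)⁻¹ := by
          refine sum_congr rfl fun n hn ↦ ?_
          rw [mem_filter, not_lt] at hn
          rw [Nat.cast_sub hn.2, abs_sub_comm,
            abs_of_nonneg (sub_nonneg.2 (by exact_mod_cast hn.2))]
      _ ≤ harmonic N := by
          refine sum_inv_natCast_comp_le_harmonic (fun a ha b hb h ↦ ?_) fun n hn ↦ ?_
          · simp only [coe_filter, mem_Icc, Set.mem_ofPred_eq] at ha hb h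
            omega
          · simp only [mem_filter, mem_Icc] at hn
            omega

lemma sum_Icc_natCast_add_rpow_neg_le {σ α : ℝ} (hσ₀ : 0 ≤ σ) (hσ₁ : σ < 1) (hα : 0 < α)
    (N : ℕ) :
    ∑ m ∈ Icc 1 N, ((m : ℝ) + α) ^ (-σ) ≤ ((N : ℝ) + α) ^ (1 - σ) / (1 - σ) := by
  have hanti : AntitoneOn (fun x : ℝ ↦ x ^ (-σ)) (Set.Icc α (α + N)) :=
    (antitoneOn_rpow_Ioi_of_exponent_nonpos (neg_nonpos.2 hσ₀)).mono
      fun x hx ↦ hα.trans_le hx.1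
  calc ∑ m ∈ Icc 1 N, ((m : ℝ) + α) ^ (-σ) = ∑ i ∈ range N, (α + ↑(i + 1)) ^ (-σ) := by
        rw [range_eq_Ico, sum_Ico_add' (fun i : ℕ ↦ (α + (i : ℝ)) ^ (-σ)), zero_add,
          Ico_add_one_right_eq_Icc]
        simp only [add_comm α]
    _ ≤ ∫ x in α..α + N, x ^ (-σ) := hanti.sum_le_integral
    _ = (((N : ℝ) + α) ^ (1 - σ) - α ^ (1 - σ)) / (1 - σ) := by
        rw [integral_rpow (Or.inl (by linarith)), add_comm α, neg_add_eq_sub]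
    _ ≤ ((N : ℝ) + α) ^ (1 - σ) / (1 - σ) :=
        div_le_div_of_nonneg_right (sub_le_self _ (by positivity)) (by linarith)

lemma harmonic_floor_le_three_mul_log {T : ℝ} (hT : 2 ≤ T) : (harmonic ⌊T⌋₊ : ℝ) ≤ 3 * log T := by
  have hN : (0 : ℝ) < ⌊T⌋₊ := by exact_mod_cast Nat.floor_pos.2 (by linarith)
  have h₁ := harmonic_le_one_add_log ⌊T⌋₊
  have h₂ : log ⌊T⌋₊ ≤ log T := log_le_log hN (Nat.floor_le (by linarith))
  have h₃ : log 2 ≤ log T := log_le_log two_pos hT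
  linarith [log_two_gt_d9]

lemma two_mul_rpow_le {T r : ℝ} (hT : 0 ≤ T) (hr : r ≤ 1) :
    (2 * T) ^ r ≤ 2 * T ^ r := by
  rw [mul_rpow zero_le_two hT]
  gcongr
  exact rpow_le_self_of_one_le one_le_two hr

theorem offdiag_sum_with_log_bigO (σ₀ : ℝ) (hσ₀ : σ₀ < 1) :
    ∃ C : ℝ, 0 < C ∧ ∀ σ : ℝ, 1 / 2 < σ → σ ≤ σ₀ → ∀ α : ℝ, 0 < α → α ≤ 1 →
      ∀ T : ℝ, 2 ≤ T →
        (∑ m ∈ Finset.Icc 1 ⌊T⌋₊, ∑ n ∈ Finset.Icc 1 ⌊T⌋₊,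
            if m ≠ n then
              (m + α) ^ (-σ) * (n + α) ^ (-σ) * |Real.log ((n + α) / (m + α))|⁻¹
            else 0)
          ≤ C * T ^ (2 - 2 * σ) * Real.log T := by
  have h1σ₀ : 0 < 1 - σ₀ := sub_pos.2 hσ₀
  refine ⟨48 / (1 - σ₀), by positivity, fun σ hσ hσσ₀ α hα₀ hα₁ T hT ↦ ?_⟩
  set N := ⌊T⌋₊
  have hσ₁ : σ < 1 := hσσ₀.trans_lt hσ₀
  have hNT : (N : ℝ) ≤ T := Nat.floor_le (by linarith)
  have hshift : ∀ m ∈ Icc 1 N, (m : ℝ) + α ≤ 2 * T := fun m hm ↦ by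
    have : (m : ℝ) ≤ N := by exact_mod_cast (mem_Icc.1 hm).2
    linarith
  have hlogT : 0 ≤ log T := log_nonneg (by linarith)
  calc _ ≤ ∑ m ∈ Icc 1 N, ∑ n ∈ Icc 1 N, (((m : ℝ) + α) ^ (-σ) + ((n : ℝ) + α) ^ (-σ)) *
        ((2 * T) ^ (1 - σ) * |(m : ℝ) - n|⁻¹) := by
        gcongr with m hm n hn
        split_ifs
        · have := rpow_neg_mul_rpow_neg_mul_inv_abs_log_div_le hσ₁.le (by positivity)
            (by positivity) (hshift m hm) (hshift n hn)
          rwa [add_sub_add_right_eq_sub, abs_sub_comm] at this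
        · positivity
    _ ≤ 2 * ((2 * T) ^ (1 - σ) * (6 * log T)) * ∑ m ∈ Icc 1 N, ((m : ℝ) + α) ^ (-σ) := by
        refine sum_sum_add_mul_le_of_symm _ (fun _ _ ↦ by positivity)
          (fun m n ↦ by rw [abs_sub_comm]) fun m hm ↦ ?_
        rw [← mul_sum]
        gcongr
        linarith [sum_inv_abs_sub_le_two_mul_harmonic (mem_Icc.1 hm).2,
          harmonic_floor_le_three_mul_log hT]
    _ ≤ 2 * ((2 * T) ^ (1 - σ) * (6 * log T)) * ((2 * T) ^ (1 - σ) / (1 - σ)) := by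
        gcongr
        refine (sum_Icc_natCast_add_rpow_neg_le (by linarith) hσ₁ hα₀ N).trans ?_
        gcongr
        linarith
    _ = 12 * ((2 * T) ^ (1 - σ) * (2 * T) ^ (1 - σ)) * log T / (1 - σ) := by ring
    _ ≤ 12 * ((2 * T ^ (1 - σ)) * (2 * T ^ (1 - σ))) * log T / (1 - σ₀) := by
        have hc : (2 * T) ^ (1 - σ) ≤ 2 * T ^ (1 - σ) :=
          two_mul_rpow_le (by linarith) (by linarith)
        gcongr
    _ = 48 / (1 - σ₀) * T ^ (2 - 2 * σ) * log T := by
        rw [show 2 - 2 * σ = (1 - σ) + (1 - σ) by ring, rpow_add (by linarith)]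
        ring
end

section
/- For 1 < n ≤ T (integers) one has ∑_{1 < n ≤ T} ∑_{n/2 ≤ m < n} (1/(m^σ n^σ)) · n/(n−m) ≪_{σ₀} T^{2−2σ} log T, uniformly for 1/2 < σ ≤ σ₀ < 1. -/
/-!
For `n / 2 ≤ m < n` one has `m ^ σ ≥ n ^ σ / 2`, so the `(n, m)` term is at most
`2 n ^ (1 - 2σ) / (n - m)`; summing over `m` gives `2 n ^ (1 - 2σ) H_{n-1}`, and
`H_{n-1} ≤ 1 + log T`. Since `-1 < 1 - 2σ ≤ 0`, comparison with `∫ x ^ (1 - 2σ) dx` bounds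
`∑_{n ≤ T} n ^ (1 - 2σ)` by `T ^ (2 - 2σ) / (2 - 2σ) ≤ T ^ (2 - 2σ) / (2 - 2σ₀)`, which is where
the dependence on `σ₀` comes from.
-/

open Finset Real

lemma half_rpow_le_rpow {x y σ : ℝ} (hy : 0 ≤ y) (hyx : y / 2 ≤ x) (hσ0 : 0 ≤ σ) (hσ1 : σ ≤ 1) :
    y ^ σ / 2 ≤ x ^ σ :=
  calc y ^ σ / 2 ≤ y ^ σ / 2 ^ σ := by
        gcongr; exact rpow_le_self_of_one_le one_le_two hσ1
    _ = (y / 2) ^ σ := (div_rpow hy zero_le_two σ).symm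
    _ ≤ x ^ σ := by gcongr

lemma one_div_rpow_mul_rpow_mul_div_sub_le {x y σ : ℝ} (hy : 0 < y) (hyx : y / 2 ≤ x)
    (hxy : x ≤ y) (hσ0 : 0 ≤ σ) (hσ1 : σ ≤ 1) :
    1 / (x ^ σ * y ^ σ) * (y / (y - x)) ≤ 2 * y ^ (1 - 2 * σ) * (y - x)⁻¹ := by
  have hx : 0 < x := by linarith
  have hyσ : 0 < y ^ σ := rpow_pos_of_pos hy σ
  have hcoef : 1 / (x ^ σ * y ^ σ) ≤ 2 / (y ^ σ * y ^ σ) := by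
    rw [div_le_div_iff₀ (by positivity) (by positivity)]
    nlinarith [half_rpow_le_rpow hy.le hyx hσ0 hσ1]
  have hpow : y ^ (1 - 2 * σ) = y / (y ^ σ * y ^ σ) := by
    rw [rpow_sub hy, rpow_one, ← rpow_add hy, two_mul]
  calc 1 / (x ^ σ * y ^ σ) * (y / (y - x)) ≤ 2 / (y ^ σ * y ^ σ) * (y / (y - x)) := by
        gcongr
    _ = 2 * y ^ (1 - 2 * σ) * (y - x)⁻¹ := by rw [hpow]; ring

lemma sum_Ico_inv_sub_eq_harmonic (n : ℕ) :
    ∑ m ∈ Ico 1 n, ((n : ℝ) - m)⁻¹ = harmonic (n - 1) := by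
  calc ∑ m ∈ Ico 1 n, ((n : ℝ) - m)⁻¹ = ∑ m ∈ Ico 1 n, ((n - m : ℕ) : ℝ)⁻¹ :=
        sum_congr rfl fun m hm => by rw [Nat.cast_sub (mem_Ico.mp hm).2.le]
    _ = ∑ k ∈ Ico 1 n, (k : ℝ)⁻¹ := by
        rw [sum_Ico_reflect (fun k : ℕ => (k : ℝ)⁻¹) 1 (Nat.le_succ n)]; simp
    _ = harmonic (n - 1) := by
        rw [sum_Ico_eq_sum_range, harmonic]; push_cast; simp only [add_comm]

lemma near_diagonal_inner_sum_le {σ : ℝ} (hσ0 : 0 ≤ σ) (hσ1 : σ ≤ 1) (n : ℕ) :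
    (∑ m ∈ Ico 1 n, if (n : ℝ) / 2 ≤ (m : ℝ) then
        (1 / ((m : ℝ) ^ σ * (n : ℝ) ^ σ)) * ((n : ℝ) / ((n : ℝ) - (m : ℝ))) else 0)
      ≤ 2 * (n : ℝ) ^ (1 - 2 * σ) * harmonic (n - 1) := by
  rw [← sum_Ico_inv_sub_eq_harmonic, mul_sum]
  gcongr with m hm
  have hmn : (m : ℝ) < n := by exact_mod_cast (mem_Ico.mp hm).2
  split_ifs with hm2
  · exact one_div_rpow_mul_rpow_mul_div_sub_le (by linarith) hm2 hmn.le hσ0 hσ1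
  · have : 0 ≤ ((n : ℝ) - m)⁻¹ := inv_nonneg.mpr (sub_nonneg.mpr hmn.le)
    positivity

lemma harmonic_le_one_add_log_of_le {n : ℕ} {T : ℝ} (hn : 1 ≤ n) (hnT : (n : ℝ) ≤ T) :
    (harmonic n : ℝ) ≤ 1 + log T := by
  have : (1 : ℝ) ≤ n := by exact_mod_cast hn
  exact (harmonic_le_one_add_log n).trans (by gcongr)

lemma sum_Icc_two_rpow_le {α : ℝ} (hα : -1 < α) (hα0 : α ≤ 0) {N : ℕ} (hN : 1 ≤ N) :
    ∑ n ∈ Icc 2 N, (n : ℝ) ^ α ≤ (N : ℝ) ^ (α + 1) / (α + 1) := by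
  have hanti : AntitoneOn (fun x : ℝ => x ^ α) (Set.Icc (1 : ℕ) N) := fun x hx _ _ hxy =>
    rpow_le_rpow_of_nonpos ((Nat.cast_pos.mpr one_pos).trans_le hx.1) hxy hα0
  have hsum := hanti.sum_le_integral_Ico hN
  rw [integral_rpow (Or.inl hα)] at hsum
  calc ∑ n ∈ Icc 2 N, (n : ℝ) ^ α = ∑ i ∈ Ico 1 N, ((i + 1 : ℕ) : ℝ) ^ α := by
        rw [sum_Ico_add' (fun n : ℕ => (n : ℝ) ^ α)]; rfl
    _ ≤ ((N : ℝ) ^ (α + 1) - 1) / (α + 1) := by simpa using hsum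
    _ ≤ (N : ℝ) ^ (α + 1) / (α + 1) := by gcongr <;> linarith

lemma one_add_log_le_three_mul_log {T : ℝ} (hT : 2 ≤ T) : 1 + log T ≤ 3 * log T := by
  have := log_le_log zero_lt_two hT
  linarith [log_two_gt_d9]

theorem near_diagonal_sum_bigO (σ₀ : ℝ) (hσ₀ : σ₀ < 1) :
    ∃ C : ℝ, 0 < C ∧ ∀ σ : ℝ, 1 / 2 < σ → σ ≤ σ₀ → ∀ T : ℝ, 2 ≤ T →
      (∑ n ∈ Finset.Icc 2 ⌊T⌋₊, ∑ m ∈ Finset.Ico 1 n,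
          if (n : ℝ) / 2 ≤ (m : ℝ) then
            (1 / ((m : ℝ) ^ σ * (n : ℝ) ^ σ)) * ((n : ℝ) / ((n : ℝ) - (m : ℝ)))
          else 0)
        ≤ C * T ^ (2 - 2 * σ) * Real.log T := by
  refine ⟨3 / (1 - σ₀), div_pos three_pos (sub_pos.mpr hσ₀), fun σ hσ hσσ₀ T hT => ?_⟩
  have hσ1 : σ < 1 := hσσ₀.trans_lt hσ₀
  set N := ⌊T⌋₊
  have hN : 2 ≤ N := Nat.le_floor (by exact_mod_cast hT)
  have hNT : (N : ℝ) ≤ T := Nat.floor_le (by linarith)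
  have hharmonic (n : ℕ) (hn : n ∈ Icc 2 N) : (harmonic (n - 1) : ℝ) ≤ 1 + log T := by
    obtain ⟨hn2, hnN⟩ := mem_Icc.mp hn
    refine harmonic_le_one_add_log_of_le (by omega) (le_trans ?_ hNT)
    exact_mod_cast (by omega : n - 1 ≤ N)
  have hpowers :=
    sum_Icc_two_rpow_le (α := 1 - 2 * σ) (by linarith) (by linarith) (N := N) (by omega)
  rw [show 1 - 2 * σ + 1 = 2 - 2 * σ by ring] at hpowers
  replace hpowers : ∑ n ∈ Icc 2 N, (n : ℝ) ^ (1 - 2 * σ) ≤ T ^ (2 - 2 * σ) / (2 - 2 * σ₀) :=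
    hpowers.trans (by gcongr <;> linarith)
  have hlog := one_add_log_le_three_mul_log hT
  calc _ ≤ ∑ n ∈ Icc 2 N, 2 * (n : ℝ) ^ (1 - 2 * σ) * (1 + log T) := by
        gcongr with n hn
        exact (near_diagonal_inner_sum_le (by linarith) hσ1.le n).trans
          (by gcongr; exact hharmonic n hn)
    _ = 2 * (1 + log T) * ∑ n ∈ Icc 2 N, (n : ℝ) ^ (1 - 2 * σ) := by
        rw [mul_sum]; exact sum_congr rfl fun n _ => by ring
    _ ≤ 2 * (3 * log T) * (T ^ (2 - 2 * σ) / (2 - 2 * σ₀)) := by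
        have : 0 < log T := log_pos (by linarith)
        gcongr
    _ = 3 / (1 - σ₀) * T ^ (2 - 2 * σ) * log T := by
        field_simp [(sub_pos.mpr hσ₀).ne']
end

section
/- Let x₁, …, x_n be elements of a complex Hilbert space H and a₁, …, a_n complex numbers with |a_j| ≤ 1 for all j. Then there exist complex numbers b₁, …, b_n with |b_j| = 1 for all j such that ‖∑_j a_j x_j − ∑_j b_j x_j‖² ≤ 4 ∑_j ‖x_j‖². -/
/-
Write each `a j` as the midpoint of the unimodular numbers `a j + w j` and `a j - w j`, where
`‖w j‖ ≤ 1`. Choosing `b j = a j - ε j w j` with signs `ε j = ±1` turns the claim into a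
balancing problem for the vectors `w j x j`, and a greedy choice of signs gives
`‖∑ ε j w j x j‖² ≤ ∑ ‖w j x j‖²`: by the parallelogram law, one of `‖S + y‖²` and `‖S - y‖²`
is at most `‖S‖² + ‖y‖²`. This even gives the constant `1` instead of `4`.
-/

open Finset

lemma Complex.exists_norm_le_one_norm_add_eq_one_norm_sub_eq_one {a : ℂ} (ha : ‖a‖ ≤ 1) :
    ∃ w : ℂ, ‖w‖ ≤ 1 ∧ ‖a + w‖ = 1 ∧ ‖a - w‖ = 1 := by
  set r := ‖a‖
  set s := √(1 - r ^ 2)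
  have hs : r ^ 2 + s ^ 2 = 1 := by
    rw [Real.sq_sqrt (by nlinarith [norm_nonneg a])]; ring
  set d := exp (a.arg * I)
  have hd : ‖d‖ = 1 := norm_exp_ofReal_mul_I _
  have had : a = r * d := (norm_mul_exp_arg_mul_I a).symm
  refine ⟨s * I * d, ?_, ?_, ?_⟩
  · rw [norm_mul, norm_mul, hd, norm_I, mul_one, mul_one, norm_real,
      Real.norm_of_nonneg (Real.sqrt_nonneg _)]
    nlinarith [Real.sqrt_nonneg (1 - r ^ 2), norm_nonneg a]
  · rw [had, ← add_mul, norm_mul, hd, norm_add_mul_I, hs, Real.sqrt_one, mul_one]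
  · rw [had, ← sub_mul, sub_eq_add_neg, ← neg_mul, ← ofReal_neg, norm_mul, hd,
      norm_add_mul_I, neg_sq, hs, Real.sqrt_one, mul_one]

section Balancing

variable {E : Type*} [NormedAddCommGroup E] [InnerProductSpace ℝ E]

lemma exists_sign_norm_add_zsmul_sq_le (S y : E) :
    ∃ σ : ℤˣ, ‖S + σ • y‖ ^ 2 ≤ ‖S‖ ^ 2 + ‖y‖ ^ 2 := by
  have := parallelogram_law_with_norm ℝ S y
  by_cases h : ‖S + y‖ ^ 2 ≤ ‖S‖ ^ 2 + ‖y‖ ^ 2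
  · exact ⟨1, by simpa using h⟩
  · exact ⟨-1, by rw [Units.neg_smul, one_smul, ← sub_eq_add_neg]; linarith⟩

lemma exists_signs_norm_sum_zsmul_sq_le {ι : Type*} (s : Finset ι) (y : ι → E) :
    ∃ ε : ι → ℤˣ, ‖∑ j ∈ s, ε j • y j‖ ^ 2 ≤ ∑ j ∈ s, ‖y j‖ ^ 2 := by
  classical
  induction s using Finset.induction_on with
  | empty => exact ⟨1, by simp⟩
  | insert i s hi ih =>
    obtain ⟨ε, hε⟩ := ih
    obtain ⟨σ, hσ⟩ := exists_sign_norm_add_zsmul_sq_le (∑ j ∈ s, ε j • y j) (y i)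
    refine ⟨Function.update ε i σ, ?_⟩
    have hs : ∑ j ∈ s, Function.update ε i σ j • y j = ∑ j ∈ s, ε j • y j :=
      sum_congr rfl fun j hj ↦ by rw [Function.update_of_ne (ne_of_mem_of_not_mem hj hi)]
    rw [sum_insert hi, sum_insert hi, hs, Function.update_self, add_comm]
    linarith

end Balancing

theorem hilbert_space_unimodular_approx_general
    {H : Type*} [NormedAddCommGroup H] [InnerProductSpace ℂ H]
    (n : ℕ) (x : Fin n → H) (a : Fin n → ℂ) (ha : ∀ j, ‖a j‖ ≤ 1) :
    ∃ b : Fin n → ℂ, (∀ j, ‖b j‖ = 1) ∧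
      ‖(∑ j, a j • x j) - ∑ j, b j • x j‖ ^ 2 ≤ 4 * ∑ j, ‖x j‖ ^ 2 := by
  choose w hw hw_add hw_sub using
    fun j ↦ Complex.exists_norm_le_one_norm_add_eq_one_norm_sub_eq_one (ha j)
  let := InnerProductSpace.rclikeToReal ℂ H
  obtain ⟨ε, hε⟩ := exists_signs_norm_sum_zsmul_sq_le univ fun j ↦ w j • x j
  refine ⟨fun j ↦ a j - ε j • w j, fun j ↦ ?_, ?_⟩
  · rcases Int.units_eq_one_or (ε j) with h | h <;> simp [h, hw_add, hw_sub]
  have hdiff : (∑ j, a j • x j) - ∑ j, (a j - ε j • w j) • x j = ∑ j, ε j • w j • x j := by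
    rw [← sum_sub_distrib]
    refine sum_congr rfl fun j _ ↦ ?_
    rw [← sub_smul, sub_sub_cancel, Units.smul_def, Units.smul_def, smul_assoc]
  have hwx : ∑ j, ‖w j • x j‖ ^ 2 ≤ ∑ j, ‖x j‖ ^ 2 := sum_le_sum fun j _ ↦ by
    rw [norm_smul]
    gcongr
    exact mul_le_of_le_one_left (norm_nonneg _) (hw j)
  have : 0 ≤ ∑ j, ‖x j‖ ^ 2 := sum_nonneg fun j _ ↦ sq_nonneg _
  rw [hdiff]
  linarith

theorem hilbert_space_unimodular_approx
    {H : Type*} [NormedAddCommGroup H] [InnerProductSpace ℂ H] [CompleteSpace H]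
    (n : ℕ) (x : Fin n → H) (a : Fin n → ℂ) (ha : ∀ j, ‖a j‖ ≤ 1) :
    ∃ b : Fin n → ℂ, (∀ j, ‖b j‖ = 1) ∧
      ‖(∑ j, a j • x j) - ∑ j, b j • x j‖ ^ 2 ≤ 4 * ∑ j, ‖x j‖ ^ 2 :=
  hilbert_space_unimodular_approx_general n x a ha
end
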